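/- arXiv:1805.06840 — 7 statements merged into one kernel-verified Lean document; each statement's English description precedes it below -/
import Mathlib

section
/- Let p ≥ 1 and let B and C be p×p integer matrices, where B is upper triangular with diagonal entries b₁, …, b_p, and C is in Smith normal form with diagonal entries c₁, …, c_p. Then there exists a p×p integer matrix N such that B + C·N is invertible over ℤ if and only if det B ≡ 1 or −1 modulo c₁ and gcd(b_j, c_j) = 1 for every j ∈ {1, …, p}. -/
/-!
Write `c` for the diagonal of `C`. The matrices `B + C * N` are exactly those whose `i`-th row is
congruent to that of `B` modulo `cᵢ`. As `c₁` divides every `cᵢ`, such an `M` is entrywise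
congruent to `B` modulo `c₁`, so `det M ≡ det B`; and modulo `cⱼ` its rows from `j` on agree with
those of `B`, so `bⱼ` divides a determinant congruent to `det M` modulo `cⱼ`.

Conversely, if `X ≡ diag(d)` and `Y ≡ diag(e)` row by row, then `X * Y ≡ diag(d * e)`. A unimodular
`X ≡ diag(b)` is built by induction on `p`: with `w = b₂ ⋯ bₚ` and `a w ≡ 1` modulo `c₁ c₂`, take
the block `[[ε a, *], [c₂, w]]` of determinant `ε ≡ b₁ ⋯ bₚ (mod c₁)` on the first two
coordinates, times a unimodular matrix on the last `p - 1` coordinates congruent to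
`diag(a b₂, b₃, …, bₚ)`. Finally `X * V ≡ B` for an upper unitriangular `V`, because each `bᵢ` is
invertible modulo `cᵢ`.
-/

namespace Matrix
variable {ι κ μ R : Type*} [CommRing R]

def RowModEq (c : ι → R) (X Y : Matrix ι κ R) : Prop :=
  ∀ i j, c i ∣ X i j - Y i j

namespace RowModEq
variable {c : ι → R} {X Y Z : Matrix ι κ R}

theorem trans (h₁ : RowModEq c X Y) (h₂ : RowModEq c Y Z) : RowModEq c X Z := fun i j => by
  simpa only [sub_add_sub_cancel] using dvd_add (h₁ i j) (h₂ i j)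

theorem mul_right [Fintype κ] (h : RowModEq c X Y) (N : Matrix κ μ R) :
    RowModEq c (X * N) (Y * N) := fun i k => by
  rw [← sub_apply, ← Matrix.sub_mul, mul_apply]
  exact Finset.dvd_sum fun j _ => (h i j).mul_right _

theorem diagonal_mul [Fintype ι] [DecidableEq ι] (h : RowModEq c X Y) (d : ι → R) :
    RowModEq c (diagonal d * X) (diagonal d * Y) := fun i j => by
  simpa only [Matrix.diagonal_mul, ← mul_sub] using (h i j).mul_left (d i)

theorem diagonal_of_dvd [DecidableEq ι] {d e : ι → R} (h : ∀ i, c i ∣ d i - e i) :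
    RowModEq c (diagonal d) (diagonal e) := fun i j => by
  by_cases hij : i = j
  · subst hij; simpa using h i
  · simp [diagonal_apply_ne _ hij]

theorem mul_diagonal [Fintype ι] [DecidableEq ι] {X Y : Matrix ι ι R} {d e : ι → R}
    (hX : RowModEq c X (diagonal d)) (hY : RowModEq c Y (diagonal e)) :
    RowModEq c (X * Y) (diagonal fun i => d i * e i) := by
  rw [← diagonal_mul_diagonal]
  exact (hX.mul_right Y).trans (hY.diagonal_mul d)

theorem add_diagonal_mul [Fintype ι] [DecidableEq ι] (B : Matrix ι κ R) (N : Matrix ι κ R) :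
    RowModEq c (B + diagonal c * N) B := fun i j =>
  ⟨N i j, by simp [Matrix.diagonal_mul]⟩

theorem exists_eq_add_diagonal_mul [Fintype ι] [DecidableEq ι] (h : RowModEq c X Y) :
    ∃ N : Matrix ι κ R, X = Y + diagonal c * N := by
  choose N hN using id h
  exact ⟨of N, ext fun i j => by simp [Matrix.diagonal_mul, ← hN]⟩

end RowModEq

theorem dvd_det_sub_det [Fintype ι] [DecidableEq ι] (m : R) {X Y : Matrix ι ι R}
    (h : ∀ i j, m ∣ X i j - Y i j) : m ∣ X.det - Y.det := by
  let π := Ideal.Quotient.mk (Ideal.span {m})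
  have hXY : π.mapMatrix X = π.mapMatrix Y := by
    ext i j; exact Ideal.Quotient.eq.2 (Ideal.mem_span_singleton.2 (h i j))
  rw [← Ideal.mem_span_singleton, ← Ideal.Quotient.eq, RingHom.map_det, RingHom.map_det, hXY]

theorem apply_self_dvd_det [Fintype ι] [DecidableEq ι] [LinearOrder ι] (M : Matrix ι ι R) (j : ι)
    (h : ∀ i k, j ≤ i → k < i → M i k = 0) : M j j ∣ M.det := by
  rw [twoBlockTriangular_det M (· < j)
    (fun i hi k hk => h i k (not_lt.1 hi) (hk.trans_le (not_lt.1 hi)))]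
  refine Dvd.dvd.mul_left ?_ _
  rw [det_of_isUpperTriangular (M := toSquareBlockProp M fun i => ¬i < j)
    (fun i k hik => h i k (not_lt.1 i.2) hik)]
  exact Finset.dvd_prod_of_mem (fun i => toSquareBlockProp M (fun i => ¬i < j) i i)
    (Finset.mem_univ ⟨j, lt_irrefl j⟩)

theorem isCoprime_of_isUnit_det_of_rowModEq [Fintype ι] [DecidableEq ι] [LinearOrder ι]
    {c : ι → R} {M B : Matrix ι ι R} (hB : B.IsUpperTriangular)
    (hc : ∀ i j, i ≤ j → c i ∣ c j) (hM : IsUnit M.det) (h : RowModEq c M B) (j : ι) :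
    IsCoprime (B j j) (c j) := by
  set M' : Matrix ι ι R := of fun i k => if j ≤ i then B i k else M i k
  have hdvd : B j j ∣ M'.det := by
    simpa [M'] using apply_self_dvd_det M' j fun i k hi hk => by simp [M', hi, hB hk]
  obtain ⟨t, ht⟩ : c j ∣ M.det - M'.det := dvd_det_sub_det _ fun i k => by
    by_cases hi : j ≤ i
    · simpa [M', hi] using (hc j i hi).trans (h i k)
    · simp [M', hi]
  obtain ⟨u, hu⟩ := hM.exists_left_inv
  exact IsCoprime.of_isCoprime_of_dvd_left ⟨u, u * t, by linear_combination hu - u * ht⟩ hdvd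

section embedBlock
variable [Fintype κ] [DecidableEq κ] [DecidableEq ι]

/-- The matrix acting as `A` on the coordinates in the range of `f` and as the identity on the
others. -/
def embedBlock (f : κ → ι) (A : Matrix κ κ R) : Matrix ι ι R :=
  1 + (1 : Matrix ι ι R).submatrix id f * (A - 1) * (1 : Matrix ι ι R).submatrix f id

variable {f : κ → ι}

theorem det_embedBlock [Fintype ι] (hf : Function.Injective f) (A : Matrix κ κ R) :
    (embedBlock f A).det = A.det := by
  rw [embedBlock, Matrix.mul_assoc, det_one_add_mul_comm, Matrix.mul_assoc,
    ← submatrix_mul _ _ _ _ _ Function.bijective_id, Matrix.mul_one, submatrix_one _ hf,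
    Matrix.mul_one, add_sub_cancel]

theorem isUnit_embedBlock_iff [Fintype ι] (hf : Function.Injective f) (A : Matrix κ κ R) :
    IsUnit (embedBlock f A) ↔ IsUnit A := by
  rw [isUnit_iff_isUnit_det, det_embedBlock hf, ← isUnit_iff_isUnit_det]

theorem embedBlock_apply_apply (hf : Function.Injective f) (A : Matrix κ κ R) (k l : κ) :
    embedBlock f A (f k) (f l) = A k l := by
  simp [embedBlock, mul_apply, one_apply, hf.eq_iff]

theorem embedBlock_apply_of_notMem_left (A : Matrix κ κ R) {i : ι} (hi : i ∉ Set.range f)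
    (j : ι) : embedBlock f A i j = (1 : Matrix ι ι R) i j := by
  simp only [Set.mem_range, not_exists] at hi
  simp [embedBlock, mul_apply, one_apply, fun k => Ne.symm (hi k)]

theorem embedBlock_apply_of_notMem_right (A : Matrix κ κ R) (i : ι) {j : ι}
    (hj : j ∉ Set.range f) : embedBlock f A i j = (1 : Matrix ι ι R) i j := by
  simp only [Set.mem_range, not_exists] at hj
  simp [embedBlock, mul_apply, one_apply, hj]

theorem RowModEq.embedBlock_diagonal (hf : Function.Injective f) {c : ι → R} {A : Matrix κ κ R}
    {d : κ → R} {e : ι → R} (hA : RowModEq (c ∘ f) A (diagonal d))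
    (he : ∀ k, e (f k) = d k) (he₁ : ∀ i ∉ Set.range f, e i = 1) :
    RowModEq c (embedBlock f A) (diagonal e) := by
  intro i j
  by_cases hi : i ∈ Set.range f
  · obtain ⟨k, rfl⟩ := hi
    by_cases hj : j ∈ Set.range f
    · obtain ⟨l, rfl⟩ := hj
      simpa [embedBlock_apply_apply hf, diagonal_apply, hf.eq_iff, he] using hA k l
    · rw [embedBlock_apply_of_notMem_right A _ hj, one_apply, diagonal_apply]
      simp [show f k ≠ j from fun h => hj ⟨k, h⟩]
  · rw [embedBlock_apply_of_notMem_left A hi, one_apply, diagonal_apply]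
    split_ifs with hij
    · simp [he₁ i hi]
    · simp

end embedBlock

theorem Fin.injective_zero_one {n : ℕ} : Function.Injective ![(0 : Fin (n + 2)), 1] := by
  intro k l h
  fin_cases k <;> fin_cases l <;> simp_all

theorem RowModEq.embedBlock_succ {n : ℕ} {c : Fin (n + 1) → R} {Y : Matrix (Fin n) (Fin n) R}
    {d : Fin n → R} (hY : RowModEq (c ∘ Fin.succ) Y (diagonal d)) :
    RowModEq c (embedBlock Fin.succ Y) (diagonal (Fin.cons 1 d)) :=
  hY.embedBlock_diagonal (Fin.succ_injective _) (fun _ => rfl) fun i =>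
    Fin.cases (fun _ => rfl) (fun j hj => absurd ⟨j, rfl⟩ hj) i

theorem rowModEq_embedBlock_zero_one {n : ℕ} {c : Fin (n + 2) → R} {α β w : R}
    (hβ : c 0 ∣ β) :
    RowModEq c (embedBlock ![0, 1] !![α, β; c 1, w]) (diagonal (Fin.cons α (Fin.cons w 1))) := by
  refine RowModEq.embedBlock_diagonal Fin.injective_zero_one (d := ![α, w]) ?_ ?_ fun i => ?_
  · intro k l
    fin_cases k <;> fin_cases l <;> simp [hβ]
  · intro k
    fin_cases k <;> simp
  · refine Fin.cases ?_ (fun i => Fin.cases ?_ (fun j _ => by simp) i) i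
    · exact fun hi => absurd ⟨0, by simp⟩ hi
    · exact fun hi => absurd ⟨1, by simp⟩ hi

theorem exists_isUnit_rowModEq_diagonal_mul [Fintype ι] [DecidableEq ι] [LinearOrder ι]
    {c : ι → R} {B : Matrix ι ι R} (hB : B.IsUpperTriangular)
    (hcop : ∀ i, IsCoprime (B i i) (c i)) :
    ∃ V : Matrix ι ι R, IsUnit V ∧ RowModEq c (diagonal B.diag * V) B := by
  choose u v huv using hcop
  refine ⟨of fun i k => if i = k then 1 else u i * B i k, ?_, fun i k => ?_⟩
  · rw [isUnit_iff_isUnit_det, det_of_isUpperTriangular fun i k (hik : k < i) => by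
      simp [hik.ne', hB hik]]
    simp
  · by_cases hik : i = k
    · simp [hik]
    · exact ⟨-(v i * B i k), by
      simp only [diagonal_mul, diag_apply, of_apply, hik, ↓reduceIte, mul_neg]
      linear_combination B i k * huv i⟩

theorem exists_isUnit_rowModEq_diagonal {n : ℕ} (c d : Fin (n + 1) → R)
    (hc : ∀ i j, i ≤ j → c i ∣ c j) (hd : ∀ i, i ≠ 0 → IsCoprime (d i) (c i)) {ε : R}
    (hε : IsUnit ε) (hdε : c 0 ∣ ∏ i, d i - ε) :
    ∃ X : Matrix (Fin (n + 1)) (Fin (n + 1)) R, IsUnit X ∧ RowModEq c X (diagonal d) := by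
  induction n generalizing ε with
  | zero =>
    refine ⟨diagonal fun _ => ε, by simpa [isUnit_iff_isUnit_det] using hε,
      RowModEq.diagonal_of_dvd fun i => ?_⟩
    rw [Fin.fin_one_eq_zero i, ← dvd_neg, neg_sub]
    simpa using hdε
  | succ n ih =>
    set w := ∏ i : Fin (n + 1), d i.succ
    have hw : IsCoprime w (c 0 * c 1) := IsCoprime.prod_left fun i _ => by
      have hdi := hd i.succ (Fin.succ_ne_zero i)
      exact (hdi.of_isCoprime_of_dvd_right (hc 0 i.succ (Fin.zero_le _))).mul_right
        (hdi.of_isCoprime_of_dvd_right (hc 1 i.succ (Fin.succ_le_succ_iff.2 (Fin.zero_le _))))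
    obtain ⟨a, y, hay⟩ := hw
    have hw' : w = d 1 * ∏ i : Fin n, d i.succ.succ := Fin.prod_univ_succ _
    obtain ⟨Y, hYu, hY⟩ := ih (c ∘ Fin.succ) (Function.update (d ∘ Fin.succ) 0 (a * d 1))
      (fun i j hij => hc _ _ (Fin.succ_le_succ_iff.2 hij))
      (fun i hi => by simpa [Function.update_of_ne hi] using hd i.succ (Fin.succ_ne_zero i))
      isUnit_one
      ⟨-(y * c 0), by
        simp only [Fin.prod_univ_succ, Function.update_self, ne_eq, Fin.succ_ne_zero,
          not_false_eq_true, Function.update_of_ne, Function.comp_apply, Fin.succ_zero_eq_one,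
          mul_neg]
        linear_combination hay - a * hw'⟩
    refine ⟨embedBlock ![0, 1] !![ε * a, -(ε * y * c 0); c 1, w] * embedBlock Fin.succ Y,
      .mul ((isUnit_embedBlock_iff Fin.injective_zero_one _).2 ?_)
        ((isUnit_embedBlock_iff (Fin.succ_injective _) _).2 hYu), ?_⟩
    · rw [isUnit_iff_isUnit_det, det_fin_two_of]
      convert hε using 1
      linear_combination ε * hay
    obtain ⟨t, ht⟩ := hdε
    rw [Fin.prod_univ_succ] at ht
    refine ((rowModEq_embedBlock_zero_one (dvd_mul_left _ _).neg_right).mul_diagonal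
      hY.embedBlock_succ).trans (RowModEq.diagonal_of_dvd fun i => ?_)
    refine Fin.cases ?_ (fun i => Fin.cases ?_ (fun j => ?_) i) i
    · exact ⟨-(a * t) - d 0 * y * c 1, by
      simp only [Fin.cons_zero, mul_one]
      linear_combination (-a) * ht + d 0 * hay⟩
    · exact ⟨-(d 1 * y * c 0), by
      simp only [Fin.succ_zero_eq_one, Fin.cons_one, Fin.cons_zero, Function.update_self, mul_neg]
      linear_combination d 1 * hay⟩
    · simp

theorem exists_isUnit_add_diagonal_mul {n : ℕ} {c : Fin (n + 1) → R}
    {B : Matrix (Fin (n + 1)) (Fin (n + 1)) R} (hB : B.IsUpperTriangular)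
    (hc : ∀ i j, i ≤ j → c i ∣ c j) (hcop : ∀ i, IsCoprime (B i i) (c i)) {ε : R}
    (hε : IsUnit ε) (hdet : c 0 ∣ B.det - ε) :
    ∃ N, IsUnit (B + diagonal c * N) := by
  obtain ⟨X, hXu, hX⟩ := exists_isUnit_rowModEq_diagonal c B.diag hc (fun i _ => hcop i) hε
    (by rwa [det_of_isUpperTriangular hB] at hdet)
  obtain ⟨V, hVu, hV⟩ := exists_isUnit_rowModEq_diagonal_mul hB hcop
  obtain ⟨N, hN⟩ := ((hX.mul_right V).trans hV).exists_eq_add_diagonal_mul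
  exact ⟨N, hN ▸ hXu.mul hVu⟩

end Matrix

open Matrix

/-- Lemma `unim` of Section 5: for `B` upper triangular and `C` in Smith normal form,
there is an integer matrix `N` with `B + C·N` invertible over `ℤ` iff
`det B ≡ ±1` modulo `c₁` and `gcd(bⱼ, cⱼ) = 1` for every `j`. -/
theorem lemma_unim (p : ℕ) (hp : 1 ≤ p)
    (B C : Matrix (Fin p) (Fin p) ℤ)
    (hB : ∀ i j : Fin p, j < i → B i j = 0)
    (hCdiag : ∀ i j : Fin p, i ≠ j → C i j = 0)
    (hCdvd : ∀ i : Fin p, ∀ h : (i : ℕ) + 1 < p,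
      C i i ∣ C ⟨(i : ℕ) + 1, h⟩ ⟨(i : ℕ) + 1, h⟩) :
    (∃ N : Matrix (Fin p) (Fin p) ℤ, IsUnit (B + C * N)) ↔
      ((B.det ≡ 1 [ZMOD C ⟨0, hp⟩ ⟨0, hp⟩] ∨ B.det ≡ -1 [ZMOD C ⟨0, hp⟩ ⟨0, hp⟩]) ∧
        ∀ j : Fin p, Int.gcd (B j j) (C j j) = 1) := by
  obtain ⟨n, rfl⟩ : ∃ n, p = n + 1 := ⟨p - 1, by omega⟩
  have hC : C = diagonal C.diag := (IsDiag.diagonal_diag fun i j h => hCdiag i j h).symm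
  have hB' : B.IsUpperTriangular := fun i j h => hB i j h
  have hc : ∀ i j, i ≤ j → C.diag i ∣ C.diag j := fun i j hij => by
    obtain h | rfl := hij.lt_or_eq
    · exact (Fin.liftFun_iff_succ (· ∣ ·)).2 (fun i => hCdvd i.castSucc (by simp)) h
    · exact dvd_rfl
  simp only [← Int.isCoprime_iff_gcd_eq_one]
  constructor
  · rintro ⟨N, hN⟩
    rw [hC, isUnit_iff_isUnit_det] at hN
    have hM := RowModEq.add_diagonal_mul (c := C.diag) B N
    refine ⟨?_, isCoprime_of_isUnit_det_of_rowModEq hB' hc hN hM⟩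
    have hdet := dvd_det_sub_det _ fun i j => (hc 0 i (Fin.zero_le i)).trans (hM i j)
    rcases Int.isUnit_iff.1 hN with h | h <;> rw [h] at hdet
    exacts [.inl (Int.modEq_iff_dvd.2 hdet), .inr (Int.modEq_iff_dvd.2 hdet)]
  · rintro ⟨hdet, hcop⟩
    obtain ⟨ε, hε, hdvd⟩ : ∃ ε : ℤ, IsUnit ε ∧ C.diag 0 ∣ B.det - ε := by
      rcases hdet with h | h
      exacts [⟨1, isUnit_one, h.symm.dvd⟩, ⟨-1, isUnit_one.neg, h.symm.dvd⟩]
    rw [hC]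
    exact exists_isUnit_add_diagonal_mul hB' hc hcop hε hdvd
end

section
/- Let p ≥ 1 and let B and C be p×p integer matrices, where B is upper triangular with diagonal entries b₁, …, b_p, and C is in Smith normal form with diagonal entries c₁, …, c_p. Then gcd(b_j, c_j) = 1 for every j ∈ {1, …, p} if and only if the ℤ-linear map ℤ^(2p) → ℤ^p induced by the concatenated p×2p matrix (B C) is surjective. -/
/-!
Column `j` of an upper triangular matrix is its diagonal entry times `eⱼ` plus a combination of
the `eᵢ` with `i < j`. So if `bⱼ` and `cⱼ` are coprime, induction on `j` puts every `eⱼ` into the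
image of `(B C)`. Conversely, if a maximal ideal `𝔪` contains `bⱼ` and `cⱼ`, it contains `cₖ` for
every `k ≥ j`. Modulo `𝔪`, the matrix `B` with its rows above row `j` replaced by unit rows is
upper triangular with a zero on the diagonal, hence has a nonzero left null vector; that vector
vanishes above row `j`, so it annihilates both `B` and `C`, and `(B C)` is not surjective.
-/

open Matrix

theorem Fin.dvd_of_forall_dvd_succ_of_le {α : Type*} [Monoid α] {p : ℕ} {c : Fin p → α}
    (h : ∀ i : Fin p, ∀ hi : (i : ℕ) + 1 < p, c i ∣ c ⟨i + 1, hi⟩) {a b : Fin p}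
    (hab : a ≤ b) : c a ∣ c b := by
  obtain ⟨b, hb⟩ := b
  change (a : ℕ) ≤ b at hab
  induction b, hab using Nat.le_induction with
  | base => exact dvd_rfl
  | succ n hn ih => exact (ih (by omega)).trans (h ⟨n, by omega⟩ hb)

namespace Matrix

theorem not_surjective_mulVecLin_of_vecMul_eq_zero {m n R : Type*} [Fintype m] [DecidableEq m]
    [Fintype n] [CommSemiring R] {M : Matrix m n R} {v : m → R} (hv : v ≠ 0) (hvM : v ᵥ* M = 0) :
    ¬ Function.Surjective M.mulVecLin := by
  intro hM
  obtain ⟨i, hi⟩ := Function.ne_iff.mp hv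
  obtain ⟨x, hx⟩ := hM (Pi.single i 1)
  rw [mulVecLin_apply] at hx
  apply hi
  simp [← dotProduct_single_one, ← hx, dotProduct_mulVec, hvM]

theorem surjective_mulVecLin_map {m n R S : Type*} [Fintype n] [CommRing R] [CommRing S]
    {f : R →+* S} (hf : Function.Surjective f) {M : Matrix m n R}
    (hM : Function.Surjective M.mulVecLin) : Function.Surjective (M.map f).mulVecLin := by
  intro y
  obtain ⟨x, rfl⟩ := hf.comp_left y
  obtain ⟨z, rfl⟩ := hM x
  exact ⟨f ∘ z, funext fun i => (RingHom.map_mulVec f M z i).symm⟩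

variable {ι R K : Type*} [LinearOrder ι]

theorem IsDiag.isUpperTriangular [Zero R] {A : Matrix ι ι R} (hA : A.IsDiag) :
    A.IsUpperTriangular :=
  fun _ _ hij => hA hij.ne'

variable [Fintype ι] [DecidableEq ι]

theorem IsUpperTriangular.diag_smul_single_mem [CommRing R] {M : Matrix ι ι R}
    (hM : M.IsUpperTriangular) {S : Submodule R (ι → R)} {j : ι}
    (hS : ∀ i < j, Pi.single i 1 ∈ S) (hMj : M *ᵥ Pi.single j 1 ∈ S) :
    M j j • Pi.single j 1 ∈ S := by
  suffices M *ᵥ Pi.single j 1 - M j j • Pi.single j 1 ∈ S by simpa using S.sub_mem hMj this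
  rw [pi_eq_sum_univ' (M *ᵥ Pi.single j 1 - M j j • Pi.single j 1)]
  refine S.sum_mem fun i _ => ?_
  rcases lt_trichotomy i j with hij | rfl | hji
  · exact S.smul_mem _ (hS i hij)
  · simp
  · simp [hM hji, hji.ne']

theorem surjective_mulVecLin_fromCols_of_isCoprime [CommRing R] {B C : Matrix ι ι R}
    (hB : B.IsUpperTriangular) (hC : C.IsUpperTriangular) (hBC : ∀ j, IsCoprime (B j j) (C j j)) :
    Function.Surjective (fromCols B C).mulVecLin := by
  set S := LinearMap.range (fromCols B C).mulVecLin
  have hsingle (j : ι) : Pi.single j 1 ∈ S := by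
    induction j using WellFoundedLT.induction with
    | _ j ih =>
    have hBj := hB.diag_smul_single_mem ih ⟨Sum.elim (Pi.single j 1) 0, by
      rw [mulVecLin_apply, fromCols_mulVec_sumElim]; simp⟩
    have hCj := hC.diag_smul_single_mem ih ⟨Sum.elim 0 (Pi.single j 1), by
      rw [mulVecLin_apply, fromCols_mulVec_sumElim]; simp⟩
    obtain ⟨a, b, hab⟩ := hBC j
    have hcomb : a • B j j • Pi.single j (1 : R) + b • C j j • Pi.single j 1 = Pi.single j 1 := by
      rw [smul_smul, smul_smul, ← add_smul, hab, one_smul]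
    exact hcomb ▸ S.add_mem (S.smul_mem a hBj) (S.smul_mem b hCj)
  rw [← LinearMap.range_eq_top, eq_top_iff, ← (Pi.basisFun R ι).span_eq, Submodule.span_le]
  rintro _ ⟨j, rfl⟩
  rw [Pi.basisFun_apply]
  exact hsingle j

theorem IsUpperTriangular.exists_vecMul_eq_zero [Field K] {B : Matrix ι ι K}
    (hB : B.IsUpperTriangular) {j : ι} (hj : B j j = 0) :
    ∃ v ≠ 0, (∀ i < j, v i = 0) ∧ v ᵥ* B = 0 := by
  -- replacing the rows above row `j` by unit rows keeps `M j j = 0` and forces `v` to vanish there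
  set M : Matrix ι ι K := Matrix.of fun i => if i < j then Pi.single i 1 else B i
  have hM : M.IsUpperTriangular := by
    intro i k (hki : k < i)
    by_cases hij : i < j
    · simp [M, hij, hki.ne]
    · simp [M, hij, hB hki]
  obtain ⟨v, hv, hvM⟩ := exists_vecMul_eq_zero_iff.mpr <|
    (det_of_isUpperTriangular hM).trans (Finset.prod_eq_zero (Finset.mem_univ j) (by simp [M, hj]))
  have hv_lt (k : ι) (hk : k < j) : v k = 0 := by
    have hcol : (fun i => M i k) = Pi.single k 1 := by
      ext i
      by_cases hij : i < j
      · simp [M, hij, Pi.single_apply, eq_comm]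
      · simp [M, hij, hB (hk.trans_le (not_lt.mp hij)),
          (hk.trans_le (not_lt.mp hij)).ne']
    simpa [vecMul, hcol] using congrFun hvM k
  refine ⟨v, hv, hv_lt, ?_⟩
  rw [← hvM]
  ext k
  refine Finset.sum_congr rfl fun i _ => ?_
  by_cases hij : i < j
  · simp [hv_lt i hij]
  · simp [M, hij]

theorem not_surjective_mulVecLin_fromCols [Field K] {B C : Matrix ι ι K}
    (hB : B.IsUpperTriangular) (hC : C.IsDiag) {j : ι} (hBj : B j j = 0)
    (hCj : ∀ k, j ≤ k → C k k = 0) : ¬ Function.Surjective (fromCols B C).mulVecLin := by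
  obtain ⟨v, hv, hv_lt, hvB⟩ := hB.exists_vecMul_eq_zero hBj
  have hvC : v ᵥ* C = 0 := by
    rw [← hC.diagonal_diag]
    ext k
    rcases lt_or_ge k j with hkj | hjk
    · simp [vecMul_diagonal, hv_lt k hkj]
    · simp [vecMul_diagonal, hCj k hjk]
  exact not_surjective_mulVecLin_of_vecMul_eq_zero hv (by simp [hvB, hvC])

theorem isCoprime_of_surjective_mulVecLin_fromCols [CommRing R] {B C : Matrix ι ι R}
    (hB : B.IsUpperTriangular) (hC : C.IsDiag) (hCdvd : ∀ a b, a ≤ b → C a a ∣ C b b)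
    (hBC : Function.Surjective (fromCols B C).mulVecLin) (j : ι) : IsCoprime (B j j) (C j j) := by
  by_contra hj
  obtain ⟨m, hm, hle⟩ :=
    Ideal.exists_le_maximal _ ((Ideal.sup_eq_top_iff_isCoprime (B j j) (C j j)).not.mpr hj)
  have hBm : B j j ∈ m := hle (Ideal.mem_sup_left (Ideal.mem_span_singleton_self _))
  have hCm : C j j ∈ m := hle (Ideal.mem_sup_right (Ideal.mem_span_singleton_self _))
  let := Ideal.Quotient.field m
  refine not_surjective_mulVecLin_fromCols (hB.map (Ideal.Quotient.mk m))
    (hC.map (map_zero (Ideal.Quotient.mk m))) (j := j) ?_ ?_ ?_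
  · simpa [Ideal.Quotient.eq_zero_iff_mem] using hBm
  · intro k hjk
    simpa [Ideal.Quotient.eq_zero_iff_mem] using m.mem_of_dvd (hCdvd j k hjk) hCm
  · rw [← fromCols_map]
    exact surjective_mulVecLin_map Ideal.Quotient.mk_surjective hBC

end Matrix

theorem prop_simplprop_general (p : ℕ)
    (B C : Matrix (Fin p) (Fin p) ℤ)
    (hB : ∀ i j : Fin p, j < i → B i j = 0)
    (hCdiag : ∀ i j : Fin p, i ≠ j → C i j = 0)
    (hCdvd : ∀ i : Fin p, ∀ h : (i : ℕ) + 1 < p,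
      C i i ∣ C ⟨(i : ℕ) + 1, h⟩ ⟨(i : ℕ) + 1, h⟩) :
    (∀ j : Fin p, Int.gcd (B j j) (C j j) = 1) ↔
      Function.Surjective (Matrix.fromCols B C).mulVecLin := by
  have hBtri : B.IsUpperTriangular := fun i j => hB i j
  have hCdiag' : C.IsDiag := fun i j => hCdiag i j
  simp only [← Int.isCoprime_iff_gcd_eq_one]
  exact ⟨surjective_mulVecLin_fromCols_of_isCoprime hBtri hCdiag'.isUpperTriangular,
    isCoprime_of_surjective_mulVecLin_fromCols hBtri hCdiag'
      fun a b hab => Fin.dvd_of_forall_dvd_succ_of_le (c := fun i => C i i) hCdvd hab⟩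

/-- Proposition `simplprop` of Section 5: for `B` upper triangular and `C` in Smith
normal form, `gcd(bⱼ, cⱼ) = 1` for every `j` iff the concatenated matrix `(B C)`
induces a surjective map `ℤ^(2p) → ℤ^p`. -/
theorem prop_simplprop (p : ℕ) (hp : 1 ≤ p)
    (B C : Matrix (Fin p) (Fin p) ℤ)
    (hB : ∀ i j : Fin p, j < i → B i j = 0)
    (hCdiag : ∀ i j : Fin p, i ≠ j → C i j = 0)
    (hCdvd : ∀ i : Fin p, ∀ h : (i : ℕ) + 1 < p,
      C i i ∣ C ⟨(i : ℕ) + 1, h⟩ ⟨(i : ℕ) + 1, h⟩) :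
    (∀ j : Fin p, Int.gcd (B j j) (C j j) = 1) ↔
      Function.Surjective (Matrix.fromCols B C).mulVecLin :=
  prop_simplprop_general p B C hB hCdiag hCdvd
end

section
/- Let p and q be natural numbers and let B be a p×q integer matrix. The ℤ-linear map ℤ^q → ℤ^p induced by B is surjective if and only if the gcd of the determinants of all p×p submatrices of B (obtained by keeping all p rows and selecting p of the q columns, in order) is equal to 1. -/
open Matrix

open Classical in
/-- The `p`-th determinantal divisor `d_p(B)` of a `p × q` integer matrix: the gcd of
the determinants of all `p × p` submatrices of `B` obtained by a strictly monotone
selection of `p` of the `q` columns (the gcd of the empty family being `0`). -/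
noncomputable def detDivisorTop (p q : ℕ) (B : Matrix (Fin p) (Fin q) ℤ) : ℤ :=
  (Finset.univ.filter fun g : Fin p → Fin q => StrictMono g).gcd
    fun g => (B.submatrix id g).det

/-!
Both directions go through the right inverses of `B`. If `B * C = 1`, then expanding
`det (B * C) = 1` multilinearly in the columns of `C` writes `1` as an integer combination of
`p × p` minors of `B`, each of which is a multiple of the gcd of the sorted ones. Conversely,
for every column selection `g`, the `q × p` matrix placing `adjugate (B.submatrix id g)` on the
rows `g` is a right inverse of `B` up to the factor `det (B.submatrix id g)`; a Bézout
combination of the minors equal to their gcd `1` then yields a genuine right inverse.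
-/

namespace Matrix

variable {m n R : Type*} [Fintype m] [Fintype n] [DecidableEq m] [CommRing R]

-- Cauchy–Binet before grouping the column selections `f` by their image.
theorem det_mul_eq_sum_prod_mul_det_submatrix (B : Matrix m n R) (C : Matrix n m R) :
    (B * C).det = ∑ f : m → n, (∏ i, C (f i) i) * (B.submatrix id f).det := by
  have hprod : ∀ σ : Equiv.Perm m,
      ∏ i, (B * C) (σ i) i = ∑ f : m → n, ∏ i, B (σ i) (f i) * C (f i) i := by
    intro σ
    simp only [mul_apply]
    rw [Finset.prod_univ_sum]
    simp [Fintype.piFinset_univ]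
  simp only [det_apply', hprod, Finset.mul_sum]
  rw [Finset.sum_comm]
  refine Finset.sum_congr rfl fun f _ => Finset.sum_congr rfl fun σ _ => ?_
  simp only [submatrix_apply, id_eq, Finset.prod_mul_distrib]
  ring

theorem exists_mul_eq_det_submatrix_smul_one [DecidableEq n] (B : Matrix m n R) (g : m → n) :
    ∃ C : Matrix n m R, B * C = (B.submatrix id g).det • 1 := by
  refine ⟨(1 : Matrix n n R).submatrix id g * adjugate (B.submatrix id g), ?_⟩
  have hselect : B * (1 : Matrix n n R).submatrix id g = B.submatrix id g :=
    mul_submatrix_one (Equiv.refl n) g B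
  rw [← Matrix.mul_assoc, hselect, mul_adjugate]

theorem exists_mul_eq_one_iff_one_mem_span_det_submatrix [DecidableEq n] (B : Matrix m n R) :
    (∃ C : Matrix n m R, B * C = 1) ↔
      (1 : R) ∈ Ideal.span (Set.range fun f : m → n => (B.submatrix id f).det) := by
  constructor
  · rintro ⟨C, hBC⟩
    have hdet : (B * C).det = 1 := by rw [hBC, det_one]
    rw [← hdet, det_mul_eq_sum_prod_mul_det_submatrix]
    exact Ideal.sum_mem _ fun f _ => Ideal.mul_mem_left _ _ (Ideal.subset_span ⟨f, rfl⟩)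
  · intro h
    suffices ∀ a ∈ Ideal.span (Set.range fun f : m → n => (B.submatrix id f).det),
        ∃ C : Matrix n m R, B * C = a • 1 by simpa using this 1 h
    intro a ha
    induction ha using Submodule.span_induction with
    | mem x hx =>
      obtain ⟨f, rfl⟩ := hx
      exact exists_mul_eq_det_submatrix_smul_one B f
    | zero => exact ⟨0, by simp⟩
    | add x y _ _ hx hy =>
      obtain ⟨C, hC⟩ := hx
      obtain ⟨D, hD⟩ := hy
      exact ⟨C + D, by rw [Matrix.mul_add, hC, hD, add_smul]⟩
    | smul a x _ hx =>
      obtain ⟨C, hC⟩ := hx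
      exact ⟨a • C, by rw [Matrix.mul_smul, hC, smul_smul, smul_eq_mul]⟩

end Matrix

theorem detDivisorTop_dvd_det_submatrix {p q : ℕ} (B : Matrix (Fin p) (Fin q) ℤ)
    (f : Fin p → Fin q) : detDivisorTop p q B ∣ (B.submatrix id f).det := by
  classical
  by_cases hf : Function.Injective f
  -- sorting an injective selection only permutes the columns of the minor
  · set σ := Tuple.sort f
    have hmono : StrictMono (f ∘ σ) :=
      (Tuple.monotone_sort f).strictMono_of_injective (hf.comp σ.injective)
    have hsorted : B.submatrix id f = (B.submatrix id (f ∘ σ)).submatrix id ⇑σ⁻¹ := by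
      ext a b
      simp
    rw [hsorted, det_permute']
    exact (Finset.gcd_dvd (by simpa using hmono)).mul_left _
  · obtain ⟨a, b, hab, hne⟩ := Function.not_injective_iff.mp hf
    rw [det_zero_of_column_eq hne fun k => by simp [hab]]
    exact dvd_zero _

theorem span_det_submatrix_eq_span_detDivisorTop {p q : ℕ} (B : Matrix (Fin p) (Fin q) ℤ) :
    Ideal.span (Set.range fun f : Fin p → Fin q => (B.submatrix id f).det) =
      Ideal.span {detDivisorTop p q B} := by
  classical
  apply le_antisymm
  · rw [Ideal.span_le]
    rintro _ ⟨f, rfl⟩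
    exact Ideal.mem_span_singleton.mpr (detDivisorTop_dvd_det_submatrix B f)
  · rw [Ideal.span_singleton_le_iff_mem]
    obtain ⟨c, hc⟩ := Finset.gcd_eq_sum_mul
      (Finset.univ.filter fun g : Fin p → Fin q => StrictMono g) fun g => (B.submatrix id g).det
    rw [detDivisorTop, hc]
    exact Ideal.sum_mem _ fun f _ => Ideal.mul_mem_right _ _ (Ideal.subset_span ⟨f, rfl⟩)

theorem detDivisorTop_nonneg {p q : ℕ} (B : Matrix (Fin p) (Fin q) ℤ) :
    0 ≤ detDivisorTop p q B :=
  Int.nonneg_of_normalize_eq_self Finset.normalize_gcd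

/-- Proposition of Section 5: the linear map `ℤ^q → ℤ^p` induced by `B` is surjective
iff the gcd of all `p × p` minors of `B` equals `1`. -/
theorem surjective_iff_detDivisorTop_eq_one (p q : ℕ) (B : Matrix (Fin p) (Fin q) ℤ) :
    Function.Surjective B.mulVecLin ↔ detDivisorTop p q B = 1 := by
  rw [coe_mulVecLin, mulVec_surjective_iff_exists_right_inverse,
    exists_mul_eq_one_iff_one_mem_span_det_submatrix, span_det_submatrix_eq_span_detDivisorTop,
    Ideal.mem_span_singleton]
  exact ⟨Int.eq_one_of_dvd_one (detDivisorTop_nonneg B), fun h => h ▸ dvd_rfl⟩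
end

section
/- Let p and r be natural numbers, B a p×p integer matrix, C a p×r integer matrix, U and V invertible p×p integer matrices, W an invertible r×r integer matrix, and Y an arbitrary r×p integer matrix. Then there exists an r×p integer matrix N such that B + C·N is invertible over ℤ if and only if there exists an r×p integer matrix N′ such that U·(B + C·Y)·V + (U·C·W)·N′ is invertible over ℤ. -/
open Matrix

/-- Invariance of Problem Ω: the solvability of "find `N` with `B + C·N` invertible
over `ℤ`" is unchanged under left multiplication of `B` and `C` by a unimodular
matrix `U`, right multiplication of `B` by a unimodular `V` and of `C` by a
unimodular `W`, and replacement of `B` by `B + C·Y`. -/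
theorem problem_omega_invariance (p r : ℕ)
    (B : Matrix (Fin p) (Fin p) ℤ) (C : Matrix (Fin p) (Fin r) ℤ)
    (U V : Matrix (Fin p) (Fin p) ℤ) (W : Matrix (Fin r) (Fin r) ℤ)
    (Y : Matrix (Fin r) (Fin p) ℤ)
    (hU : IsUnit U) (hV : IsUnit V) (hW : IsUnit W) :
    (∃ N : Matrix (Fin r) (Fin p) ℤ, IsUnit (B + C * N)) ↔
      (∃ N' : Matrix (Fin r) (Fin p) ℤ, IsUnit (U * (B + C * Y) * V + U * C * W * N')) := by
  have hw : W * (↑hW.unit⁻¹ : Matrix (Fin r) (Fin r) ℤ) = 1 := hW.mul_val_inv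
  have hv : V * (↑hV.unit⁻¹ : Matrix (Fin p) (Fin p) ℤ) = 1 := hV.mul_val_inv
  have hw' : ∀ X : Matrix (Fin r) (Fin p) ℤ,
      W * ((↑hW.unit⁻¹ : Matrix (Fin r) (Fin r) ℤ) * X) = X := fun X => by
    rw [← Matrix.mul_assoc, hw, Matrix.one_mul]
  have hv' : ∀ X : Matrix (Fin p) (Fin p) ℤ,
      (↑hV.unit⁻¹ : Matrix (Fin p) (Fin p) ℤ) * (V * X) = X := fun X => by
    rw [← Matrix.mul_assoc, hV.val_inv_mul, Matrix.one_mul]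
  constructor
  · rintro ⟨N, hN⟩
    refine ⟨(↑hW.unit⁻¹ : Matrix (Fin r) (Fin r) ℤ) * (N - Y) * V, ?_⟩
    have key : U * (B + C * Y) * V +
        U * C * W * ((↑hW.unit⁻¹ : Matrix (Fin r) (Fin r) ℤ) * (N - Y) * V)
        = U * (B + C * N) * V := by
      simp only [Matrix.mul_assoc, hw', Matrix.mul_add, Matrix.add_mul,
        Matrix.mul_sub, Matrix.sub_mul]
      abel
    rw [key]
    exact (hU.mul hN).mul hV
  · rintro ⟨N', hN'⟩
    refine ⟨Y + W * N' * (↑hV.unit⁻¹ : Matrix (Fin p) (Fin p) ℤ), ?_⟩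
    have key : U * (B + C * (Y + W * N' * (↑hV.unit⁻¹ : Matrix (Fin p) (Fin p) ℤ))) * V
        = U * (B + C * Y) * V + U * C * W * N' := by
      have hvv : ∀ X : Matrix (Fin r) (Fin p) ℤ,
          X * ((↑hV.unit⁻¹ : Matrix (Fin p) (Fin p) ℤ) * V) = X := fun X => by
        rw [hV.val_inv_mul, Matrix.mul_one]
      simp only [Matrix.mul_assoc, Matrix.mul_add, Matrix.add_mul]
      rw [hV.val_inv_mul, Matrix.mul_one]
      abel
    have hUBV : IsUnit (U * (B + C * (Y + W * N' * (↑hV.unit⁻¹ : Matrix (Fin p) (Fin p) ℤ))) * V) := by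
      rw [key]; exact hN'
    set X := B + C * (Y + W * N' * (↑hV.unit⁻¹ : Matrix (Fin p) (Fin p) ℤ)) with hX
    have := ((hU.unit⁻¹).isUnit.mul hUBV).mul (hV.unit⁻¹).isUnit
    have heq : (↑hU.unit⁻¹ : Matrix (Fin p) (Fin p) ℤ) * (U * X * V) *
        (↑hV.unit⁻¹ : Matrix (Fin p) (Fin p) ℤ) = X := by
      calc (↑hU.unit⁻¹ : Matrix (Fin p) (Fin p) ℤ) * (U * X * V) *
            (↑hV.unit⁻¹ : Matrix (Fin p) (Fin p) ℤ)
          = ((↑hU.unit⁻¹ : Matrix (Fin p) (Fin p) ℤ) * U) * X *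
            (V * (↑hV.unit⁻¹ : Matrix (Fin p) (Fin p) ℤ)) := by
            simp only [Matrix.mul_assoc]
        _ = X := by rw [hU.val_inv_mul, hv, Matrix.one_mul, Matrix.mul_one]
    rwa [heq] at this
end

section
/- Let n ≥ 1 be a natural number. Let A, B, C be chain complexes of abelian groups indexed by the natural numbers such that each A_k, B_k, C_k is a finitely generated free abelian group and A_k = B_k = C_k = 0 for all k > n. Let f : A → B and g : B → C be chain maps such that for every k the sequence 0 → A_k → B_k → C_k → 0 is a short exact sequence. Assume that H_0(B) ≅ ℤ, H_n(B) ≅ ℤ, and H_k(B) = 0 for all k ∉ {0, n}. Then the following are equivalent: (i) H_n(A) ≅ ℤ and H_k(A) = 0 for all k ≠ n; (ii) H_0(C) ≅ ℤ and H_k(C) = 0 for all k ≠ 0. -/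
open CategoryTheory CategoryTheory.Limits

/-!
Everything is read off the long exact homology sequence of `0 → A → B → C → 0`. Where `H(B)`
vanishes on both sides, the connecting map `H_{k+1}(C) → H_k(A)` is an isomorphism.
In degree `0` the map `H₀(B) → H₀(C)` is onto, hence an isomorphism once `H₀(A) = 0` or
`H₀(C) ≅ ℤ` (a surjection `ℤ → ℤ` is injective). In degree `n`, if `H_n(A) ≅ ℤ` injects into
`H_n(B) ≅ ℤ`, its image has finite index, so `H_n(C)` is a torsion group; but `C` vanishes above
`n`, so `H_n(C)` is a subgroup of the free group `C_n`, hence `0`.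
-/

namespace AddMonoidHom

variable {M N P : Type*} [AddCommGroup M] [AddCommGroup N] [AddCommGroup P]

theorem injective_of_surjective_of_addEquiv [Module.Finite ℤ M] (e : N ≃+ M) (φ : M →+ N)
    (hφ : Function.Surjective φ) : Function.Injective φ := by
  have : Function.Injective ((e : N →+ M).comp φ).toIntLinearMap :=
    OrzechProperty.injective_of_surjective_endomorphism _ (e.surjective.comp hφ)
  exact Function.Injective.of_comp (f := e) this

theorem subsingleton_of_surjective_of_comp_eq_zero [Nontrivial M] [IsAddTorsionFree P]
    (e : N ≃+ ℤ) {φ : M →+ N} {ψ : N →+ P} (hφ : Function.Injective φ)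
    (hψ : Function.Surjective ψ) (hψφ : ψ.comp φ = 0) : Subsingleton P := by
  obtain ⟨x, hx⟩ := exists_ne (0 : M)
  have hd : e (φ x) ≠ 0 := by simpa using (map_ne_zero_iff φ hφ).2 hx
  have hsmul : ∀ y, e (φ x) • y = e y • φ x := fun y => e.injective (by simp [mul_comm])
  refine subsingleton_of_forall_eq 0 fun p => ?_
  obtain ⟨y, rfl⟩ := hψ p
  have : e (φ x) • ψ y = 0 := by
    rw [← map_zsmul, hsmul, map_zsmul, ← comp_apply, hψφ, zero_apply, smul_zero]
  exact (IsAddTorsionFree.zsmul_eq_zero_iff_right hd).1 this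

end AddMonoidHom

namespace HomologicalComplex

variable {ι : Type*} {c : ComplexShape ι}

theorem isZero_homology_of_isZero_X {𝒜 : Type*} [Category 𝒜] [Abelian 𝒜]
    (K : HomologicalComplex 𝒜 c) {i : ι} (h : IsZero (K.X i)) : IsZero (K.homology i) :=
  ShortComplex.isZero_homology_of_isZero_X₂ (K.sc i) h

theorem isAddTorsionFree_homology (K : HomologicalComplex AddCommGrpCat c) {i j : ι}
    (hij : c.prev j = i) (hd : K.d i j = 0) [IsAddTorsionFree (K.X j)] :
    IsAddTorsionFree (K.homology j) := by
  have := K.isIso_homologyπ i j hij hd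
  exact Function.Injective.isAddTorsionFree (inv (K.homologyπ j) ≫ K.iCycles j).hom
    ((AddCommGrpCat.mono_iff_injective _).1 inferInstance)

theorem exists_shortExact_mk_of_degreewise {A B C : HomologicalComplex AddCommGrpCat c}
    (f : A ⟶ B) (g : B ⟶ C) (hinj : ∀ k, Function.Injective (f.f k))
    (hsurj : ∀ k, Function.Surjective (g.f k))
    (hexact : ∀ k, ∀ y : B.X k, g.f k y = 0 ↔ ∃ x : A.X k, f.f k x = y) :
    ∃ w, (ShortComplex.mk f g w).ShortExact := by
  have w : f ≫ g = 0 := by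
    ext k x
    simpa using (hexact k _).2 ⟨x, rfl⟩
  refine ⟨w, shortExact_of_degreewise_shortExact _ fun k => ?_⟩
  exact
    { exact := (ShortComplex.ab_exact_iff _).2 fun y hy => (hexact k y).1 hy
      mono_f := (AddCommGrpCat.mono_iff_injective _).2 (hinj k)
      epi_g := (AddCommGrpCat.epi_iff_surjective _).2 (hsurj k) }

end HomologicalComplex

namespace CategoryTheory.ShortComplex

theorem subsingleton_homology_X₃_of_iso_int {ι : Type*} {c : ComplexShape ι}
    (S : ShortComplex (HomologicalComplex AddCommGrpCat c)) (i : ι)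
    (eB : S.X₂.homology i ≅ AddCommGrpCat.of ℤ) [Nontrivial (S.X₁.homology i)]
    [IsAddTorsionFree (S.X₃.homology i)] [Mono (HomologicalComplex.homologyMap S.f i)]
    [Epi (HomologicalComplex.homologyMap S.g i)] :
    Subsingleton (S.X₃.homology i) :=
  AddMonoidHom.subsingleton_of_surjective_of_comp_eq_zero eB.addCommGroupIsoToAddEquiv
    (φ := (HomologicalComplex.homologyMap S.f i).hom)
    (ψ := (HomologicalComplex.homologyMap S.g i).hom)
    ((AddCommGrpCat.mono_iff_injective _).1 inferInstance)
    ((AddCommGrpCat.epi_iff_surjective _).1 inferInstance)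
    (by rw [← AddCommGrpCat.hom_comp, ← HomologicalComplex.homologyMap_comp, S.zero,
      HomologicalComplex.homologyMap_zero, AddCommGrpCat.hom_zero])

namespace ShortExact

section

variable {𝒜 ι : Type*} [Category 𝒜] [Abelian 𝒜] {c : ComplexShape ι}
  {S : ShortComplex (HomologicalComplex 𝒜 c)} (hS : S.ShortExact)
include hS

theorem mono_homologyMap_f (i j : ι) (hij : c.Rel i j) (h : IsZero (S.X₃.homology i)) :
    Mono (HomologicalComplex.homologyMap S.f j) :=
  (hS.homology_exact₁ i j hij).mono_g (h.eq_of_src _ _)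

theorem epi_homologyMap_f {i : ι} (h : IsZero (S.X₃.homology i)) :
    Epi (HomologicalComplex.homologyMap S.f i) :=
  (hS.homology_exact₂ i).epi_f (h.eq_of_tgt _ _)

theorem mono_homologyMap_g {i : ι} (h : IsZero (S.X₁.homology i)) :
    Mono (HomologicalComplex.homologyMap S.g i) :=
  (hS.homology_exact₂ i).mono_g (h.eq_of_src _ _)

theorem epi_homologyMap_g (i j : ι) (hij : c.Rel i j) (h : IsZero (S.X₁.homology j)) :
    Epi (HomologicalComplex.homologyMap S.g i) :=
  (hS.homology_exact₃ i j hij).epi_f (h.eq_of_tgt _ _)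

end

theorem epi_homologyMap_g_zero {𝒜 : Type*} [Category 𝒜] [Abelian 𝒜]
    {S : ShortComplex (ChainComplex 𝒜 ℕ)} (hS : S.ShortExact) :
    Epi (HomologicalComplex.homologyMap S.g 0) :=
  have := hS.epi_g
  HomologicalComplex.epi_homologyMap_of_epi_of_not_rel S.g 0 (by simp)

end ShortExact

end CategoryTheory.ShortComplex

def IntHomologyConcentratedIn (K : ChainComplex AddCommGrpCat ℕ) (m : ℕ) : Prop :=
  Nonempty (K.homology m ≅ AddCommGrpCat.of ℤ) ∧ ∀ k, k ≠ m → Subsingleton (K.homology k)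

section SphereHomology

open HomologicalComplex
open AddCommGrpCat (isZero_iff_subsingleton)

variable {n : ℕ} {S : ShortComplex (ChainComplex AddCommGrpCat ℕ)} (hS : S.ShortExact)
  (eB0 : S.X₂.homology 0 ≅ AddCommGrpCat.of ℤ) (eBn : S.X₂.homology n ≅ AddCommGrpCat.of ℤ)
  (hB : ∀ k, k ≠ 0 → k ≠ n → Subsingleton (S.X₂.homology k))
include hS eB0 eBn hB

theorem intHomologyConcentratedIn_X₃ (hn : n ≠ 0) [IsAddTorsionFree (S.X₃.X n)]
    (htop : ∀ k, n < k → Subsingleton (S.X₃.X k)) (hA : IntHomologyConcentratedIn S.X₁ n) :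
    IntHomologyConcentratedIn S.X₃ 0 := by
  obtain ⟨⟨eA⟩, hA⟩ := hA
  have hAzero : ∀ k, k ≠ n → IsZero (S.X₁.homology k) := fun k hk =>
    isZero_iff_subsingleton.2 (hA k hk)
  have hCtop : ∀ k, n < k → IsZero (S.X₃.X k) := fun k hk =>
    isZero_iff_subsingleton.2 (htop k hk)
  refine ⟨?_, fun k hk => isZero_iff_subsingleton.1 ?_⟩
  · have := hS.mono_homologyMap_g (hAzero 0 hn.symm)
    have := hS.epi_homologyMap_g_zero
    have := isIso_of_mono_of_epi (homologyMap S.g 0)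
    exact ⟨(asIso (homologyMap S.g 0)).symm ≪≫ eB0⟩
  obtain ⟨j, rfl⟩ := Nat.exists_eq_succ_of_ne_zero hk
  rcases lt_trichotomy (j + 1) n with hlt | rfl | hgt
  · exact (hS.homology_exact₃ (j + 1) j (by simp)).isZero_X₂
      ((isZero_iff_subsingleton.2 (hB _ hk hlt.ne)).eq_of_src _ _)
      ((hAzero j (by omega)).eq_of_tgt _ _)
  · have := hS.mono_homologyMap_f (j + 2) (j + 1) (by simp)
      (S.X₃.isZero_homology_of_isZero_X (hCtop _ (by omega)))
    have := hS.epi_homologyMap_g (j + 1) j (by simp) (hAzero j (by omega))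
    have := S.X₃.isAddTorsionFree_homology (i := j + 2) (j := j + 1) (by simp)
      ((hCtop _ (by omega)).eq_of_src _ _)
    have := eA.addCommGroupIsoToAddEquiv.symm.injective.nontrivial
    exact isZero_iff_subsingleton.2 (S.subsingleton_homology_X₃_of_iso_int (j + 1) eBn)
  · exact S.X₃.isZero_homology_of_isZero_X (hCtop _ hgt)

theorem intHomologyConcentratedIn_X₁ (hn : n ≠ 0) (hC : IntHomologyConcentratedIn S.X₃ 0) :
    IntHomologyConcentratedIn S.X₁ n := by
  obtain ⟨⟨eC⟩, hC⟩ := hC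
  have hCzero : ∀ k, k ≠ 0 → IsZero (S.X₃.homology k) := fun k hk =>
    isZero_iff_subsingleton.2 (hC k hk)
  refine ⟨?_, fun k hk => ?_⟩
  · have := hS.mono_homologyMap_f (n + 1) n (by simp) (hCzero _ (by omega))
    have := hS.epi_homologyMap_f (hCzero n hn)
    have := isIso_of_mono_of_epi (homologyMap S.f n)
    exact ⟨asIso (homologyMap S.f n) ≪≫ eBn⟩
  have hg : Mono (homologyMap S.g k) := by
    rcases eq_or_ne k 0 with rfl | hk0
    · have : Module.Finite ℤ (S.X₂.homology 0) :=
        .equiv eB0.addCommGroupIsoToAddEquiv.symm.toIntLinearEquiv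
      have := hS.epi_homologyMap_g_zero
      exact (AddCommGrpCat.mono_iff_injective _).2 <|
        AddMonoidHom.injective_of_surjective_of_addEquiv (eC ≪≫ eB0.symm).addCommGroupIsoToAddEquiv
          _ ((AddCommGrpCat.epi_iff_surjective _).1 inferInstance)
    · exact (isZero_iff_subsingleton.2 (hB k hk0 hk)).mono _
  have hA := hS.exactAt_X₁ k hg fun i hi => (hCzero i (by simp at hi; omega)).epi _
  exact isZero_iff_subsingleton.1 ((exactAt_iff_isZero_homology _ _).1 hA)

end SphereHomology

theorem property_P_iff_property_Pminus_general (n : ℕ) (hn : 1 ≤ n)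
    (A B C : ChainComplex AddCommGrpCat ℕ)
    (hCfree : ∀ k, Module.Free ℤ (C.X k))
    (hCtop : ∀ k, n < k → Subsingleton (C.X k))
    (f : A ⟶ B) (g : B ⟶ C)
    (hinj : ∀ k, Function.Injective (f.f k))
    (hsurj : ∀ k, Function.Surjective (g.f k))
    (hexact : ∀ k, ∀ y : B.X k, g.f k y = 0 ↔ ∃ x : A.X k, f.f k x = y)
    (hB0 : Nonempty (B.homology 0 ≅ AddCommGrpCat.of ℤ))
    (hBn : Nonempty (B.homology n ≅ AddCommGrpCat.of ℤ))
    (hBk : ∀ k, k ≠ 0 → k ≠ n → Subsingleton (B.homology k)) :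
    ((Nonempty (A.homology n ≅ AddCommGrpCat.of ℤ) ∧
        ∀ k, k ≠ n → Subsingleton (A.homology k)) ↔
      (Nonempty (C.homology 0 ≅ AddCommGrpCat.of ℤ) ∧
        ∀ k, k ≠ 0 → Subsingleton (C.homology k))) := by
  obtain ⟨eB0⟩ := hB0
  obtain ⟨eBn⟩ := hBn
  obtain ⟨_, hS⟩ := HomologicalComplex.exists_shortExact_mk_of_degreewise f g hinj hsurj hexact
  have := hCfree n
  have : IsAddTorsionFree (C.X n) := .of_isTorsionFree ℤ _
  exact ⟨intHomologyConcentratedIn_X₃ hS eB0 eBn hBk (by omega) hCtop,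
    intHomologyConcentratedIn_X₁ hS eB0 eBn hBk (by omega)⟩

/-- Equivalence of properties (P) and (P−) (Section 3): given a degreewise short exact
sequence `0 → A → B → C → 0` of chain complexes of finitely generated free abelian
groups vanishing above degree `n`, where `B` has the homology of the `n`-sphere,
`A` is acyclic except for `H_n(A) ≅ ℤ` iff `C` is acyclic except for `H_0(C) ≅ ℤ`. -/
theorem property_P_iff_property_Pminus (n : ℕ) (hn : 1 ≤ n)
    (A B C : ChainComplex AddCommGrpCat ℕ)
    (hAfree : ∀ k, Module.Free ℤ (A.X k)) (hAfin : ∀ k, Module.Finite ℤ (A.X k))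
    (hBfree : ∀ k, Module.Free ℤ (B.X k)) (hBfin : ∀ k, Module.Finite ℤ (B.X k))
    (hCfree : ∀ k, Module.Free ℤ (C.X k)) (hCfin : ∀ k, Module.Finite ℤ (C.X k))
    (hAtop : ∀ k, n < k → Subsingleton (A.X k))
    (hBtop : ∀ k, n < k → Subsingleton (B.X k))
    (hCtop : ∀ k, n < k → Subsingleton (C.X k))
    (f : A ⟶ B) (g : B ⟶ C)
    (hinj : ∀ k, Function.Injective (f.f k))
    (hsurj : ∀ k, Function.Surjective (g.f k))
    (hexact : ∀ k, ∀ y : B.X k, g.f k y = 0 ↔ ∃ x : A.X k, f.f k x = y)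
    (hB0 : Nonempty (B.homology 0 ≅ AddCommGrpCat.of ℤ))
    (hBn : Nonempty (B.homology n ≅ AddCommGrpCat.of ℤ))
    (hBk : ∀ k, k ≠ 0 → k ≠ n → Subsingleton (B.homology k)) :
    ((Nonempty (A.homology n ≅ AddCommGrpCat.of ℤ) ∧
        ∀ k, k ≠ n → Subsingleton (A.homology k)) ↔
      (Nonempty (C.homology 0 ≅ AddCommGrpCat.of ℤ) ∧
        ∀ k, k ≠ 0 → Subsingleton (C.homology k))) :=
  property_P_iff_property_Pminus_general n hn A B C hCfree hCtop f g hinj hsurj hexact hB0 hBn hBk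
end

section
/- Let m be a natural number and let F : (ℝ^m) × ℝ → ℝ be continuously differentiable. Let a : ℝ → ℝ^m be continuous on [0,1] and assume that for every t ∈ [0,1] the derivative of the map x ↦ F(x, t) at the point a(t) is zero. Assume moreover that F has no critical point with time coordinate in [0,1], i.e. for every x ∈ ℝ^m and every t ∈ [0,1] the total derivative of F at (x, t) is nonzero. Write ∂_t F(x, t) for the derivative of s ↦ F(x, s) at s = t. Then either ∂_t F(a(t), t) > 0 for every t ∈ [0,1], or ∂_t F(a(t), t) < 0 for every t ∈ [0,1]; in particular the sign of ∂_t F(a(t), t) equals the sign of ∂_t F(a(0), 0) for all t ∈ [0,1]. -/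
open Set

/-
The time derivative `∂ₜF (a t, t)` is continuous in `t`, since `F` is `C¹` and `a` is continuous.
It cannot vanish: at `(a t, t)` the space derivative already vanishes, so a vanishing time
derivative would make `(a t, t)` a critical point of `F`. A continuous nonvanishing function on
the interval `[0, 1]` keeps a constant sign.
-/

section PartialDerivatives

variable {𝕜 : Type*} [NontriviallyNormedField 𝕜]
  {E E' G : Type*} [NormedAddCommGroup E] [NormedSpace 𝕜 E] [NormedAddCommGroup E']
  [NormedSpace 𝕜 E'] [NormedAddCommGroup G] [NormedSpace 𝕜 G]

theorem fderiv_slice_left {F : E × E' → G} {x : E} {y : E'} (hF : DifferentiableAt 𝕜 F (x, y)) :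
    fderiv 𝕜 (fun x' => F (x', y)) x = (fderiv 𝕜 F (x, y)).comp (.inl 𝕜 E E') :=
  (hF.hasFDerivAt.comp x (hasFDerivAt_prodMk_left x y)).fderiv

theorem deriv_slice_right {F : E × 𝕜 → G} {x : E} {t : 𝕜} (hF : DifferentiableAt 𝕜 F (x, t)) :
    deriv (fun s => F (x, s)) t = fderiv 𝕜 F (x, t) (0, 1) :=
  (hF.hasFDerivAt.comp_hasDerivAt t ((hasDerivAt_const t x).prodMk (hasDerivAt_id t))).deriv

theorem fderiv_eq_zero_of_partial_derivs_eq_zero {F : E × 𝕜 → G} {x : E} {t : 𝕜}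
    (hF : DifferentiableAt 𝕜 F (x, t)) (hx : fderiv 𝕜 (fun x' => F (x', t)) x = 0)
    (ht : deriv (fun s => F (x, s)) t = 0) : fderiv 𝕜 F (x, t) = 0 := by
  rw [fderiv_slice_left hF] at hx
  rw [deriv_slice_right hF] at ht
  refine ContinuousLinearMap.prod_ext (by simpa using hx) (ContinuousLinearMap.ext_ring ?_)
  simpa using ht

theorem ContinuousOn.deriv_slice_right_along {F : E × 𝕜 → G} (hF : ContDiff 𝕜 1 F)
    {a : 𝕜 → E} {s : Set 𝕜} (ha : ContinuousOn a s) :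
    ContinuousOn (fun t => deriv (fun s => F (a t, s)) t) s := by
  simp only [deriv_slice_right (hF.differentiable one_ne_zero _)]
  exact ((hF.continuous_fderiv one_ne_zero).comp_continuousOn (ha.prodMk continuousOn_id)).clm_apply
    continuousOn_const

end PartialDerivatives

/-- Lemma `fate` (Section 2): along a continuous path `t ↦ a t` of critical points of
the slices `x ↦ F (x, t)` of a `C¹` function `F` with no critical point over `[0, 1]`,
the time derivative `∂ₜF (a t, t)` keeps a constant sign; in particular its sign
equals its sign at `t = 0`. -/
theorem lemma_fate (m : ℕ) (F : (Fin m → ℝ) × ℝ → ℝ) (hF : ContDiff ℝ 1 F)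
    (a : ℝ → (Fin m → ℝ)) (ha : ContinuousOn a (Icc 0 1))
    (hcrit : ∀ t ∈ Icc (0 : ℝ) 1, fderiv ℝ (fun x => F (x, t)) (a t) = 0)
    (hnoncrit : ∀ (x : Fin m → ℝ), ∀ t ∈ Icc (0 : ℝ) 1, fderiv ℝ F (x, t) ≠ 0) :
    ((∀ t ∈ Icc (0 : ℝ) 1, 0 < deriv (fun s => F (a t, s)) t) ∨
      (∀ t ∈ Icc (0 : ℝ) 1, deriv (fun s => F (a t, s)) t < 0)) ∧
    (∀ t ∈ Icc (0 : ℝ) 1,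
      Real.sign (deriv (fun s => F (a t, s)) t) =
        Real.sign (deriv (fun s => F (a 0, s)) 0)) := by
  have hne : ∀ t ∈ Icc (0 : ℝ) 1, deriv (fun s => F (a t, s)) t ≠ 0 := fun t ht h =>
    hnoncrit (a t) t ht <|
      fderiv_eq_zero_of_partial_derivs_eq_zero (hF.differentiable one_ne_zero _) (hcrit t ht) h
  have hsign := isPreconnected_Icc.mapsTo_Ioi_or_Iio (ha.deriv_slice_right_along hF) hne
  have h0 : (0 : ℝ) ∈ Icc (0 : ℝ) 1 := left_mem_Icc.mpr zero_le_one
  rcases hsign with hpos | hneg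
  · exact ⟨.inl fun t ht => hpos ht, fun t ht => by
      rw [Real.sign_of_pos (hpos ht), Real.sign_of_pos (hpos h0)]⟩
  · exact ⟨.inr fun t ht => hneg ht, fun t ht => by
      rw [Real.sign_of_neg (hneg ht), Real.sign_of_neg (hneg h0)]⟩
end

section
/- Let m be a natural number, let F : (ℝ^m) × ℝ → ℝ be continuously differentiable, and let t₀ > 0. Let a, b : [0, t₀) → ℝ^m be two paths such that for every t ∈ [0, t₀): the derivative of x ↦ F(x, t) at a(t) is zero and the derivative of x ↦ F(x, t) at b(t) is zero; moreover ∂_t F(a(t), t) > 0 and ∂_t F(b(t), t) < 0, where ∂_t F(x, t) denotes the derivative of s ↦ F(x, s) at s = t. Suppose there is a point c ∈ ℝ^m such that a(t) → c and b(t) → c as t → t₀ from below. Then the total derivative of F at (c, t₀) is zero, i.e. (c, t₀) is a critical point of F. -/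
/-!
Along `t ↦ (a t, t)` the derivative of `F` annihilates the space directions and is nonnegative
on `(0, 1)`; both conditions are closed, so by continuity of `fderiv ℝ F` they hold at `(c, t₀)`.
Along `b` the same holds with "nonpositive", so the time component of `fderiv ℝ F (c, t₀)`
vanishes as well.
-/

open Set Filter Topology ContinuousLinearMap

section Slices

variable {𝕜 E G : Type*} [NontriviallyNormedField 𝕜] [NormedAddCommGroup E] [NormedSpace 𝕜 E]
  [NormedAddCommGroup G] [NormedSpace 𝕜 G] {f : E × 𝕜 → G} {x : E} {t : 𝕜}

theorem fderiv_comp_prodMk_left_eq (hf : DifferentiableAt 𝕜 f (x, t)) :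
    fderiv 𝕜 (fun y => f (y, t)) x = (fderiv 𝕜 f (x, t)).comp (inl 𝕜 E 𝕜) :=
  (hf.hasFDerivAt.comp x (hasFDerivAt_prodMk_left x t)).fderiv

theorem deriv_comp_prodMk_right_eq (hf : DifferentiableAt 𝕜 f (x, t)) :
    deriv (fun s => f (x, s)) t = fderiv 𝕜 f (x, t) (0, 1) :=
  (hf.hasFDerivAt.comp_hasDerivAt t ((hasDerivAt_const t x).prodMk (hasDerivAt_id t))).deriv

theorem fderiv_mem_of_eventually_mem_along {c : E} {t₀ : 𝕜}
    (hf : ContinuousAt (fderiv 𝕜 f) (c, t₀)) {s : Set (E × 𝕜 →L[𝕜] G)} (hs : IsClosed s)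
    {l : Filter 𝕜} [l.NeBot] (hl : l ≤ 𝓝 t₀) {γ : 𝕜 → E} (hγ : Tendsto γ l (𝓝 c))
    (h : ∀ᶠ t in l, fderiv 𝕜 f (γ t, t) ∈ s) : fderiv 𝕜 f (c, t₀) ∈ s :=
  hs.mem_of_tendsto (hf.tendsto.comp (hγ.prodMk_nhds (tendsto_id.mono_left hl))) h

end Slices

section Critical

variable {E : Type*} [NormedAddCommGroup E] [NormedSpace ℝ E]

def spaceCriticalTimeNonneg : Set (E × ℝ →L[ℝ] ℝ) :=
  {L | L.comp (inl ℝ E ℝ) = 0 ∧ 0 ≤ L (0, 1)}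

def spaceCriticalTimeNonpos : Set (E × ℝ →L[ℝ] ℝ) :=
  {L | L.comp (inl ℝ E ℝ) = 0 ∧ L (0, 1) ≤ 0}

theorem isClosed_spaceCriticalTimeNonneg : IsClosed (spaceCriticalTimeNonneg (E := E)) :=
  (isClosed_eq (by fun_prop) continuous_const).inter
    (isClosed_le continuous_const (apply ℝ ℝ ((0 : E), (1 : ℝ))).continuous)

theorem isClosed_spaceCriticalTimeNonpos : IsClosed (spaceCriticalTimeNonpos (E := E)) :=
  (isClosed_eq (by fun_prop) continuous_const).inter
    (isClosed_le (apply ℝ ℝ ((0 : E), (1 : ℝ))).continuous continuous_const)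

theorem eq_zero_of_mem_spaceCriticalTimeNonneg_of_mem_spaceCriticalTimeNonpos
    {L : E × ℝ →L[ℝ] ℝ} (hpos : L ∈ spaceCriticalTimeNonneg)
    (hneg : L ∈ spaceCriticalTimeNonpos) : L = 0 := by
  have htime : L (0, 1) = 0 := le_antisymm hneg.2 hpos.2
  refine ContinuousLinearMap.ext fun v => ?_
  rw [← L.comp_inl_add_comp_inr, hpos.1]
  simpa [htime] using L.map_smul v.2 ((0 : E), (1 : ℝ))

end Critical

/-- Lemma `noncrit` (Section 2): if two paths of critical points of the slices
`x ↦ F (x, t)`, one with positive and one with negative time derivative of `F`, merge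
at a common limit point `c` as `t → t₀⁻`, then `(c, t₀)` is a critical point of `F`. -/
theorem lemma_noncrit (m : ℕ) (F : (Fin m → ℝ) × ℝ → ℝ) (hF : ContDiff ℝ 1 F)
    (t₀ : ℝ) (ht₀ : 0 < t₀) (a b : ℝ → (Fin m → ℝ))
    (hacrit : ∀ t, 0 ≤ t → t < t₀ → fderiv ℝ (fun x => F (x, t)) (a t) = 0)
    (hbcrit : ∀ t, 0 ≤ t → t < t₀ → fderiv ℝ (fun x => F (x, t)) (b t) = 0)
    (hapos : ∀ t, 0 ≤ t → t < t₀ → 0 < deriv (fun s => F (a t, s)) t)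
    (hbneg : ∀ t, 0 ≤ t → t < t₀ → deriv (fun s => F (b t, s)) t < 0)
    (c : Fin m → ℝ)
    (hac : Tendsto a (nhdsWithin t₀ (Iio t₀)) (nhds c))
    (hbc : Tendsto b (nhdsWithin t₀ (Iio t₀)) (nhds c)) :
    fderiv ℝ F (c, t₀) = 0 := by
  have hdiff : Differentiable ℝ F := hF.differentiable one_ne_zero
  have hcont : ContinuousAt (fderiv ℝ F) (c, t₀) :=
    (hF.continuous_fderiv one_ne_zero).continuousAt
  have hnear : ∀ᶠ t in 𝓝[<] t₀, 0 ≤ t ∧ t < t₀ := by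
    filter_upwards [Ioo_mem_nhdsLT ht₀] with t ht using ⟨ht.1.le, ht.2⟩
  have hpos : fderiv ℝ F (c, t₀) ∈ spaceCriticalTimeNonneg :=
    fderiv_mem_of_eventually_mem_along hcont isClosed_spaceCriticalTimeNonneg
      nhdsWithin_le_nhds hac
      (hnear.mono fun t ⟨h0, ht⟩ =>
        ⟨fderiv_comp_prodMk_left_eq (hdiff _) ▸ hacrit t h0 ht,
          (deriv_comp_prodMk_right_eq (hdiff _) ▸ hapos t h0 ht).le⟩)
  have hneg : fderiv ℝ F (c, t₀) ∈ spaceCriticalTimeNonpos :=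
    fderiv_mem_of_eventually_mem_along hcont isClosed_spaceCriticalTimeNonpos
      nhdsWithin_le_nhds hbc
      (hnear.mono fun t ⟨h0, ht⟩ =>
        ⟨fderiv_comp_prodMk_left_eq (hdiff _) ▸ hbcrit t h0 ht,
          (deriv_comp_prodMk_right_eq (hdiff _) ▸ hbneg t h0 ht).le⟩)
  exact eq_zero_of_mem_spaceCriticalTimeNonneg_of_mem_spaceCriticalTimeNonpos hpos hneg
end
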